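/- arXiv:2205.10164 — 4 statements merged into one kernel-verified Lean document; each statement's English description precedes it below -/
import Mathlib

section
/- For every odd integer n ≥ 1 and every t ∈ {2, 2n, n², 2n²}, there exists a pair of orthogonal cyclic P_n-decompositions of the complete multipartite graph K_{((2n²+t)/t)×t}, realized on vertex set Z_{2n²+t} with parts the cosets of the order-t subgroup J. -/
/-!
Take an `n × n` array of positive integers `A r + B c + 1` that represent every element of
`ZMod v` outside `J`, up to sign, exactly once. A row is an arithmetic progression `a, a + b, …`,
and these are, up to sign, the differences along the zigzag path `0, a, -b, a + b, -2b, …`,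
which has no repeated vertex as long as `a + b (n - 1) < v`. The translates of the row paths
form a cyclic `P_n`-decomposition, and so do those of the column paths. A row path and a
column path can only share edges whose difference comes from the single entry common to the
row and the column, so the two decompositions are orthogonal.
-/

open Function

section DifferenceMethod

variable {G : Type*} [AddCommGroup G]

def EqUpToSign (a b : G) : Prop := a = b ∨ a = -b

namespace EqUpToSign

theorem refl (a : G) : EqUpToSign a a := Or.inl rfl

theorem symm {a b : G} : EqUpToSign a b → EqUpToSign b a := by
  rintro (rfl | rfl)
  exacts [refl _, Or.inr (neg_neg b).symm]

theorem trans {a b c : G} : EqUpToSign a b → EqUpToSign b c → EqUpToSign a c := by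
  rintro (rfl | rfl) (rfl | rfl)
  exacts [Or.inl rfl, Or.inr rfl, Or.inr rfl, Or.inl (neg_neg c)]

theorem ne_neg {a b : G} (h : EqUpToSign a b) (hb : b ≠ -b) : a ≠ -a := by
  rcases h with rfl | rfl
  exacts [hb, fun h => hb (by rw [neg_neg] at h; exact h.symm)]

end EqUpToSign

variable {n : ℕ} {ι ι' : Type*}

def pathEdge (p : Fin (n + 1) → G) (k : Fin n) : Sym2 G := s(p k.castSucc, p k.succ)

def pathDiff (p : Fin (n + 1) → G) (k : Fin n) : G := p k.castSucc - p k.succ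

def IsPathDecomposition (J : Set G) (D : Set (Fin (n + 1) → G)) : Prop :=
  (∀ p ∈ D, Injective p ∧ ∀ k, pathDiff p k ∉ J) ∧
  ∀ x y : G, x ≠ y → x - y ∉ J → ∃! p, p ∈ D ∧ ∃ k, s(x, y) = pathEdge p k

def IsOrthogonal (D D' : Set (Fin (n + 1) → G)) : Prop :=
  ∀ p ∈ D, ∀ q ∈ D', {e | (∃ k, e = pathEdge p k) ∧ (∃ k, e = pathEdge q k)}.Subsingleton

def translates (b : ι → Fin (n + 1) → G) : Set (Fin (n + 1) → G) :=
  {q | ∃ r g, q = fun k => b r k + g}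

theorem translate_mem_translates {b : ι → Fin (n + 1) → G} {q : Fin (n + 1) → G}
    (hq : q ∈ translates b) (g : G) : (fun k => q k + g) ∈ translates b := by
  obtain ⟨r, h, rfl⟩ := hq
  exact ⟨r, h + g, by simp only [add_assoc]⟩

theorem pathDiff_add_const (p : Fin (n + 1) → G) (g : G) (k : Fin n) :
    pathDiff (fun i => p i + g) k = pathDiff p k :=
  add_sub_add_right_eq_sub _ _ _

theorem eqUpToSign_of_mk_eq_pathEdge {x y : G} {p : Fin (n + 1) → G} {k : Fin n}
    (h : s(x, y) = pathEdge p k) : EqUpToSign (x - y) (pathDiff p k) := by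
  rcases Sym2.eq_iff.1 h with ⟨rfl, rfl⟩ | ⟨rfl, rfl⟩
  exacts [Or.inl rfl, Or.inr (neg_sub _ _).symm]

theorem eqUpToSign_of_pathEdge_eq {p q : Fin (n + 1) → G} {k l : Fin n}
    (h : pathEdge p k = pathEdge q l) : EqUpToSign (pathDiff p k) (pathDiff q l) :=
  eqUpToSign_of_mk_eq_pathEdge h

theorem exists_mk_eq_pathEdge_add_const {x y : G} {p : Fin (n + 1) → G} {k : Fin n}
    (h : EqUpToSign (x - y) (pathDiff p k)) :
    ∃ g, s(x, y) = pathEdge (fun i => p i + g) k := by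
  simp only [pathEdge, Sym2.eq_iff]
  rcases h with h | h
  · refine ⟨x - p k.castSucc, Or.inl ⟨by abel, ?_⟩⟩
    rw [← sub_sub_cancel x y, h, pathDiff]
    abel
  · refine ⟨y - p k.castSucc, Or.inr ⟨?_, by abel⟩⟩
    rw [← sub_add_cancel x y, h, pathDiff]
    abel

theorem add_const_eq_of_pathEdge_eq {p : Fin (n + 1) → G} {k : Fin n} {g g' : G}
    (hp : pathDiff p k ≠ -pathDiff p k)
    (h : pathEdge (fun i => p i + g) k = pathEdge (fun i => p i + g') k) : g = g' := by
  simp only [pathEdge, Sym2.eq_iff] at h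
  rcases h with ⟨h, -⟩ | ⟨h₁, h₂⟩
  · exact add_left_cancel h
  · refine absurd ?_ hp
    calc pathDiff p k = (p k.castSucc + g) - (p k.succ + g) := by rw [pathDiff]; abel
      _ = (p k.succ + g') - (p k.castSucc + g') := by rw [h₁, h₂]
      _ = -pathDiff p k := by rw [pathDiff]; abel

variable {J : Set G}

theorem isPathDecomposition_translates (b : ι → Fin (n + 1) → G) (d : ι → Fin n → G)
    (hb : ∀ r, Injective (b r)) (hd : ∀ r k, EqUpToSign (pathDiff (b r) k) (d r k))
    (hJ : ∀ r k, d r k ∉ J ∧ -d r k ∉ J)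
    (hsep : ∀ r k r' k', EqUpToSign (d r k) (d r' k') → r = r' ∧ k = k')
    (hne : ∀ r k, d r k ≠ -d r k)
    (hcover : ∀ x, x ≠ 0 → x ∉ J → ∃ r k, EqUpToSign x (d r k)) :
    IsPathDecomposition J (translates b) := by
  refine ⟨?_, fun x y hxy hxyJ => ?_⟩
  · rintro _ ⟨r, g, rfl⟩
    refine ⟨fun k k' h => hb r (add_right_cancel h), fun k => ?_⟩
    rw [pathDiff_add_const]
    rcases hd r k with h | h <;> rw [h]
    exacts [(hJ r k).1, (hJ r k).2]
  have hdiff : ∀ q ∈ translates b, ∀ k, s(x, y) = pathEdge q k →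
      ∃ r g, q = (fun i => b r i + g) ∧ EqUpToSign (x - y) (d r k) := by
    rintro _ ⟨r, g, rfl⟩ k h
    have := eqUpToSign_of_mk_eq_pathEdge h
    rw [pathDiff_add_const] at this
    exact ⟨r, g, rfl, this.trans (hd r k)⟩
  refine existsUnique_of_exists_of_unique ?_ ?_
  · obtain ⟨r, k, hrk⟩ := hcover (x - y) (sub_ne_zero.2 hxy) hxyJ
    obtain ⟨g, hg⟩ := exists_mk_eq_pathEdge_add_const (hrk.trans (hd r k).symm)
    exact ⟨_, ⟨r, g, rfl⟩, k, hg⟩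
  · rintro _ _ ⟨hq₁, k₁, h₁⟩ ⟨hq₂, k₂, h₂⟩
    obtain ⟨r₁, g₁, rfl, hd₁⟩ := hdiff _ hq₁ k₁ h₁
    obtain ⟨r₂, g₂, rfl, hd₂⟩ := hdiff _ hq₂ k₂ h₂
    obtain ⟨rfl, rfl⟩ := hsep r₁ k₁ r₂ k₂ (hd₁.symm.trans hd₂)
    rw [add_const_eq_of_pathEdge_eq ((hd r₁ k₁).ne_neg (hne r₁ k₁)) (h₁.symm.trans h₂)]

theorem isOrthogonal_translates (b : ι → Fin (n + 1) → G) (b' : ι' → Fin (n + 1) → G)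
    (d : ι → Fin n → G) (d' : ι' → Fin n → G)
    (hd : ∀ r k, EqUpToSign (pathDiff (b r) k) (d r k))
    (hd' : ∀ r k, EqUpToSign (pathDiff (b' r) k) (d' r k))
    (hcross : ∀ r r' k l k' l', EqUpToSign (d r k) (d' r' l) →
      EqUpToSign (d r k') (d' r' l') → k = k') :
    IsOrthogonal (translates b) (translates b') := by
  rintro _ ⟨r, g, rfl⟩ _ ⟨r', g', rfl⟩ _ ⟨⟨k, rfl⟩, l, h⟩ _ ⟨⟨k', rfl⟩, l', h'⟩
  have hshared : ∀ {k l}, pathEdge (fun i => b r i + g) k = pathEdge (fun i => b' r' i + g') l →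
      EqUpToSign (d r k) (d' r' l) := by
    intro k l h
    have := eqUpToSign_of_pathEdge_eq h
    rw [pathDiff_add_const, pathDiff_add_const] at this
    exact (hd r k).symm.trans (this.trans (hd' r' l))
  rw [hcross r r' k l k' l' (hshared h) (hshared h')]

end DifferenceMethod

def zigzag (a b : ℤ) (k : ℕ) : ℤ := if Even k then -(b * (k / 2 : ℕ)) else a + b * (k / 2 : ℕ)

theorem zigzag_two_mul (a b : ℤ) (j : ℕ) : zigzag a b (2 * j) = -(b * j) := by
  simp [zigzag]

theorem zigzag_two_mul_add_one (a b : ℤ) (j : ℕ) : zigzag a b (2 * j + 1) = a + b * j := by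
  simp [zigzag, show (2 * j + 1) / 2 = j by omega]

theorem zigzag_sub_zigzag_succ (a b : ℤ) (k : ℕ) :
    EqUpToSign (zigzag a b k - zigzag a b (k + 1)) (a + b * k) := by
  rcases Nat.even_or_odd' k with ⟨j, rfl | rfl⟩
  · right
    rw [zigzag_two_mul, zigzag_two_mul_add_one]
    push_cast; ring
  · left
    rw [show 2 * j + 1 + 1 = 2 * (j + 1) by ring, zigzag_two_mul, zigzag_two_mul_add_one]
    push_cast; ring

theorem zigzag_injective {a b : ℤ} (ha : 0 < a) (hb : 0 < b) : Injective (zigzag a b) := by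
  intro k k' h
  rcases Nat.even_or_odd' k with ⟨j, rfl | rfl⟩ <;>
    rcases Nat.even_or_odd' k' with ⟨j', rfl | rfl⟩ <;>
    simp only [zigzag_two_mul, zigzag_two_mul_add_one, neg_inj, add_right_inj,
      mul_right_inj' hb.ne', Nat.cast_inj] at h
  · rw [h]
  · nlinarith [mul_nonneg hb.le (Nat.cast_nonneg (α := ℤ) j)]
  · nlinarith [mul_nonneg hb.le (Nat.cast_nonneg (α := ℤ) j')]
  · rw [h]

theorem zigzag_mem_Icc {a b : ℤ} (ha : 0 ≤ a) (hb : 0 ≤ b) {n k : ℕ} (hk : k ≤ n) :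
    zigzag a b k ∈ Set.Icc (-(b * (n / 2 : ℕ))) (a + b * ((n - 1) / 2 : ℕ)) := by
  have h₁ : 0 ≤ b * ((n - 1) / 2 : ℕ) := by positivity
  have h₂ : 0 ≤ b * (n / 2 : ℕ) := by positivity
  rcases Nat.even_or_odd' k with ⟨j, rfl | rfl⟩
  · have hj : (j : ℤ) ≤ (n / 2 : ℕ) := by exact_mod_cast (by omega : j ≤ n / 2)
    rw [zigzag_two_mul, Set.mem_Icc]
    constructor <;> nlinarith
  · have hj : (j : ℤ) ≤ ((n - 1) / 2 : ℕ) := by exact_mod_cast (by omega : j ≤ (n - 1) / 2)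
    rw [zigzag_two_mul_add_one, Set.mem_Icc]
    constructor <;> nlinarith

theorem zigzag_intCast_injOn {v n : ℕ} {a b : ℤ} (ha : 0 < a) (hb : 0 < b)
    (hlen : ∀ k < n, a + b * k < v) {k k' : ℕ} (hk : k ≤ n) (hk' : k' ≤ n)
    (h : (zigzag a b k : ZMod v) = zigzag a b k') : k = k' := by
  rcases Nat.eq_zero_or_pos n with rfl | hn
  · omega
  -- all the values `zigzag a b k`, `k ≤ n`, lie in an interval of length `a + b * (n - 1) < v`
  have hwidth : ((n / 2 : ℕ) : ℤ) + ((n - 1) / 2 : ℕ) = (n - 1 : ℕ) := by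
    norm_cast; omega
  have hlt := hlen (n - 1) (by omega)
  rw [← hwidth] at hlt
  obtain ⟨h₁, h₂⟩ := zigzag_mem_Icc ha.le hb.le hk
  obtain ⟨h₁', h₂'⟩ := zigzag_mem_Icc ha.le hb.le hk'
  refine zigzag_injective ha hb (sub_eq_zero.1 (Int.eq_zero_of_abs_lt_dvd
    ((ZMod.intCast_eq_intCast_iff_dvd_sub _ _ _).1 h) ?_)).symm
  rw [abs_sub_lt_iff]
  constructor <;> linarith

def zigzagPath (v n : ℕ) (a b : ℤ) (k : Fin (n + 1)) : ZMod v := zigzag a b k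

theorem zigzagPath_injective {v n : ℕ} {a b : ℤ} (ha : 0 < a) (hb : 0 < b)
    (hlen : ∀ k < n, a + b * k < v) : Injective (zigzagPath v n a b) :=
  fun k k' h => Fin.ext (zigzag_intCast_injOn ha hb hlen k.is_le k'.is_le h)

theorem pathDiff_zigzagPath (v n : ℕ) (a b : ℤ) (k : Fin n) :
    EqUpToSign (pathDiff (zigzagPath v n a b) k) ((a + b * k : ℤ) : ZMod v) := by
  rcases zigzag_sub_zigzag_succ a b k with h | h <;>
    [left; right] <;>
    simp only [pathDiff, zigzagPath, Fin.val_castSucc, Fin.val_succ, ← Int.cast_sub, h,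
      Int.cast_neg]

def arrayEntry (A B r c : ℕ) : ℕ := A * r + B * c + 1

theorem arrayEntry_comm (A B r c : ℕ) : arrayEntry A B r c = arrayEntry B A c r := by
  rw [arrayEntry, arrayEntry, add_comm (A * r)]

theorem pathDiff_zigzagPath_arrayEntry (v n A B r : ℕ) (k : Fin n) :
    EqUpToSign (pathDiff (zigzagPath v n (A * r + 1) B) k) (arrayEntry A B r k : ZMod v) := by
  convert pathDiff_zigzagPath v n (A * r + 1) B k using 1
  rw [arrayEntry]; push_cast; ring

theorem zigzagPath_arrayEntry_injective {v n A B r : ℕ} (hB : 0 < B)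
    (hlt : ∀ k < n, arrayEntry A B r k < v) : Injective (zigzagPath v n (A * r + 1) B) := by
  refine zigzagPath_injective (by positivity) (by exact_mod_cast hB) fun k hk => ?_
  have := hlt k hk
  rw [arrayEntry] at this
  zify at this
  linarith

/-- The entries `arrayEntry A B r c` with `r, c < n` represent each element of `ZMod v` outside
the multiples of `m`, up to sign, exactly once. -/
structure IsDifferenceArray (v m n A B : ℕ) : Prop where
  dvd : m ∣ v
  pos_left : 0 < A
  pos_right : 0 < B
  mul_lt : ∀ c < n, B * c < A
  entry_lt : ∀ r < n, ∀ c < n, arrayEntry A B r c < v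
  not_dvd_entry : ∀ r < n, ∀ c < n, ¬ m ∣ arrayEntry A B r c
  entry_add_entry_ne : ∀ r < n, ∀ c < n, ∀ r' < n, ∀ c' < n,
    arrayEntry A B r c + arrayEntry A B r' c' ≠ v
  exists_entry : ∀ X, 0 < X → X < v → ¬ m ∣ X →
    ∃ r < n, ∃ c < n, arrayEntry A B r c = X ∨ arrayEntry A B r c + X = v

theorem mul_add_mul_inj {A B r c r' c' : ℕ} (hB : 0 < B) (hc : B * c < A) (hc' : B * c' < A)
    (h : A * r + B * c = A * r' + B * c') : r = r' ∧ c = c' := by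
  have hA : 0 < A := by omega
  obtain ⟨hr, hc⟩ := (Nat.div_mod_unique hA).2 ⟨rfl, hc⟩
  obtain ⟨hr', hc'⟩ := (Nat.div_mod_unique hA).2 ⟨rfl, hc'⟩
  rw [add_comm, h] at hr hc
  rw [add_comm] at hr' hc'
  exact ⟨hr.symm.trans hr', Nat.eq_of_mul_eq_mul_left hB (hc.symm.trans hc')⟩

theorem ZMod.exists_eq_natCast_mul_iff_dvd_val {v m : ℕ} [NeZero v] (hm : m ∣ v) (x : ZMod v) :
    (∃ y : ZMod v, x = m * y) ↔ m ∣ x.val := by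
  constructor
  · rintro ⟨y, rfl⟩
    rw [ZMod.val_mul, Nat.dvd_mod_iff hm, ZMod.val_natCast]
    exact ((Nat.dvd_mod_iff hm).2 dvd_rfl).mul_right _
  · rintro ⟨k, hk⟩
    exact ⟨k, by rw [← ZMod.natCast_zmod_val x, hk, Nat.cast_mul]⟩

namespace IsDifferenceArray

variable {v m n A B r c r' c' : ℕ}

theorem val_entry (H : IsDifferenceArray v m n A B) (hr : r < n) (hc : c < n) :
    (arrayEntry A B r c : ZMod v).val = arrayEntry A B r c :=
  ZMod.val_natCast_of_lt (H.entry_lt r hr c hc)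

theorem entry_injective (H : IsDifferenceArray v m n A B) (hr : r < n) (hc : c < n)
    (hr' : r' < n) (hc' : c' < n) (h : (arrayEntry A B r c : ZMod v) = arrayEntry A B r' c') :
    r = r' ∧ c = c' := by
  have h := congrArg ZMod.val h
  rw [H.val_entry hr hc, H.val_entry hr' hc', arrayEntry, arrayEntry] at h
  exact mul_add_mul_inj H.pos_right (H.mul_lt c hc) (H.mul_lt c' hc') (by omega)

theorem entry_add_entry_ne_zero (H : IsDifferenceArray v m n A B) (hr : r < n) (hc : c < n)
    (hr' : r' < n) (hc' : c' < n) : (arrayEntry A B r c : ZMod v) + arrayEntry A B r' c' ≠ 0 := by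
  rw [← Nat.cast_add, Ne, ZMod.natCast_eq_zero_iff]
  intro hdvd
  have h₁ := H.entry_lt r hr c hc
  have h₂ := H.entry_lt r' hr' c' hc'
  exact H.entry_add_entry_ne r hr c hc r' hr' c' hc'
    (Nat.eq_of_dvd_of_lt_two_mul (by simp [arrayEntry]) hdvd (by omega))

theorem eqUpToSign_entry (H : IsDifferenceArray v m n A B) (hr : r < n) (hc : c < n)
    (hr' : r' < n) (hc' : c' < n)
    (h : EqUpToSign (arrayEntry A B r c : ZMod v) (arrayEntry A B r' c')) : r = r' ∧ c = c' := by
  rcases h with h | h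
  · exact H.entry_injective hr hc hr' hc' h
  · exact absurd (eq_neg_iff_add_eq_zero.1 h) (H.entry_add_entry_ne_zero hr hc hr' hc')

theorem entry_not_mem [NeZero v] (H : IsDifferenceArray v m n A B) {J : Set (ZMod v)}
    (hJ : ∀ x, x ∈ J ↔ m ∣ x.val) (hr : r < n) (hc : c < n) :
    (arrayEntry A B r c : ZMod v) ∉ J ∧ -(arrayEntry A B r c : ZMod v) ∉ J := by
  have hne : (arrayEntry A B r c : ZMod v) ≠ 0 := by
    rw [← ZMod.val_ne_zero, H.val_entry hr hc]; simp [arrayEntry]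
  have hlt := H.entry_lt r hr c hc
  rw [hJ, hJ, ZMod.neg_val, if_neg hne, H.val_entry hr hc,
    Nat.dvd_sub_iff_right hlt.le H.dvd]
  exact ⟨H.not_dvd_entry r hr c hc, H.not_dvd_entry r hr c hc⟩

theorem exists_eq_entry [NeZero v] (H : IsDifferenceArray v m n A B) {J : Set (ZMod v)}
    (hJ : ∀ x, x ∈ J ↔ m ∣ x.val) {x : ZMod v} (hx : x ≠ 0) (hxJ : x ∉ J) :
    ∃ r < n, ∃ c < n, EqUpToSign x (arrayEntry A B r c) := by
  obtain ⟨r, hr, c, hc, h | h⟩ :=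
    H.exists_entry x.val (ZMod.val_pos.2 hx) (ZMod.val_lt x) (by rwa [← hJ])
  · exact ⟨r, hr, c, hc, Or.inl (by rw [h, ZMod.natCast_zmod_val])⟩
  · refine ⟨r, hr, c, hc, Or.inr (eq_neg_of_add_eq_zero_right ?_)⟩
    rw [← ZMod.natCast_zmod_val x, ← Nat.cast_add, h, ZMod.natCast_self]

theorem exists_orthogonal [NeZero v] (H : IsDifferenceArray v m n A B) (J : Set (ZMod v))
    (hJ : J = {x | ∃ y : ZMod v, x = (m : ZMod v) * y}) :
    ∃ D D' : Set (Fin (n + 1) → ZMod v), IsPathDecomposition J D ∧ IsPathDecomposition J D' ∧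
      (∀ p ∈ D, ∀ g, (fun k => p k + g) ∈ D) ∧ (∀ p ∈ D', ∀ g, (fun k => p k + g) ∈ D') ∧
      IsOrthogonal D D' := by
  have hJ' (x : ZMod v) : x ∈ J ↔ m ∣ x.val := by
    rw [hJ]; exact ZMod.exists_eq_natCast_mul_iff_dvd_val H.dvd x
  let e (r c : Fin n) : ZMod v := arrayEntry A B r c
  let rows (r : Fin n) := zigzagPath v n (A * r + 1) B
  let cols (c : Fin n) := zigzagPath v n (B * c + 1) A
  have hrows (r k : Fin n) : EqUpToSign (pathDiff (rows r) k) (e r k) :=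
    pathDiff_zigzagPath_arrayEntry v n A B r k
  have hcols (c k : Fin n) : EqUpToSign (pathDiff (cols c) k) (e k c) := by
    simp only [e, arrayEntry_comm A B k]
    exact pathDiff_zigzagPath_arrayEntry v n B A c k
  have hsep (r c r' c' : Fin n) (h : EqUpToSign (e r c) (e r' c')) : r = r' ∧ c = c' := by
    obtain ⟨hr, hc⟩ := H.eqUpToSign_entry r.2 c.2 r'.2 c'.2 h
    exact ⟨Fin.ext hr, Fin.ext hc⟩
  have hne (r c : Fin n) : e r c ≠ -e r c := fun h =>
    H.entry_add_entry_ne_zero r.2 c.2 r.2 c.2 (eq_neg_iff_add_eq_zero.1 h)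
  refine ⟨translates rows, translates cols, ?_, ?_, fun p hp g => translate_mem_translates hp g,
    fun p hp g => translate_mem_translates hp g, ?_⟩
  · refine isPathDecomposition_translates rows e
      (fun r => zigzagPath_arrayEntry_injective H.pos_right (H.entry_lt r r.2)) hrows
      (fun r k => H.entry_not_mem hJ' r.2 k.2) hsep hne fun x hx hxJ => ?_
    obtain ⟨r, hr, c, hc, h⟩ := H.exists_eq_entry hJ' hx hxJ
    exact ⟨⟨r, hr⟩, ⟨c, hc⟩, h⟩
  · refine isPathDecomposition_translates cols (fun c k => e k c)
      (fun c => zigzagPath_arrayEntry_injective H.pos_left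
        fun k hk => arrayEntry_comm A B k c ▸ H.entry_lt k hk c c.2) hcols
      (fun c k => H.entry_not_mem hJ' k.2 c.2) (fun c k c' k' h => (hsep k c k' c' h).symm)
      (fun c k => hne k c) fun x hx hxJ => ?_
    obtain ⟨r, hr, c, hc, h⟩ := H.exists_eq_entry hJ' hx hxJ
    exact ⟨⟨c, hc⟩, ⟨r, hr⟩, h⟩
  · exact isOrthogonal_translates rows cols e (fun c k => e k c) hrows hcols
      fun r c k l k' l' h h' => (hsep r k l c h).2.trans (hsep r k' l' c h').2.symm

end IsDifferenceArray

theorem exists_lt_mul_add_eq {n i : ℕ} (hi : i < n * n) : ∃ r < n, ∃ c < n, n * r + c = i := by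
  have hn : 0 < n := Nat.pos_of_mul_pos_left (Nat.zero_lt_of_lt hi)
  exact ⟨i / n, Nat.div_lt_of_lt_mul hi, i % n, Nat.mod_lt i hn, Nat.div_add_mod i n⟩

theorem arrayEntry_mul_left (B n r c : ℕ) : arrayEntry (B * n) B r c = B * (n * r + c) + 1 := by
  rw [arrayEntry]; ring

theorem mul_add_lt_mul_self {n r c : ℕ} (hr : r < n) (hc : c < n) : n * r + c < n * n := by
  nlinarith

theorem IsDifferenceArray.of_lt_half {v m n A B h : ℕ} (hv : v = 2 * h) (hm : m ∣ h)
    (hA : 0 < A) (hB : 0 < B) (hBA : ∀ c < n, B * c < A)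
    (hlt : ∀ r < n, ∀ c < n, arrayEntry A B r c < h)
    (hdvd : ∀ r < n, ∀ c < n, ¬ m ∣ arrayEntry A B r c)
    (hsurj : ∀ X, 0 < X → X < h → ¬ m ∣ X → ∃ r < n, ∃ c < n, arrayEntry A B r c = X) :
    IsDifferenceArray v m n A B where
  dvd := hv ▸ hm.mul_left 2
  pos_left := hA
  pos_right := hB
  mul_lt := hBA
  entry_lt r hr c hc := by have := hlt r hr c hc; omega
  not_dvd_entry := hdvd
  entry_add_entry_ne r hr c hc r' hr' c' hc' := by
    have := hlt r hr c hc; have := hlt r' hr' c' hc'; omega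
  exists_entry X hX hXv hXm := by
    rcases lt_trichotomy X h with hXh | rfl | hXh
    · obtain ⟨r, hr, c, hc, hrc⟩ := hsurj X hX hXh hXm
      exact ⟨r, hr, c, hc, Or.inl hrc⟩
    · exact absurd hm hXm
    · have hm' : ¬ m ∣ v - X := fun hd =>
        hXm ((Nat.dvd_sub_iff_right hXv.le (hv ▸ hm.mul_left 2)).1 hd)
      obtain ⟨r, hr, c, hc, hrc⟩ := hsurj (v - X) (by omega) (by omega) hm'
      exact ⟨r, hr, c, hc, Or.inr (by omega)⟩

theorem isDifferenceArray_two {n : ℕ} (hn : 0 < n) :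
    IsDifferenceArray (2 * n ^ 2 + 2) (2 * n ^ 2 / 2 + 1) n (1 * n) 1 := by
  rw [Nat.mul_div_cancel_left _ two_pos]
  refine .of_lt_half (h := n ^ 2 + 1) (by ring) dvd_rfl (by omega) one_pos (by omega)
    (fun r hr c hc => ?_) (fun r hr c hc => ?_) fun X hX hXh _ => ?_
  · have := mul_add_lt_mul_self hr hc
    rw [arrayEntry_mul_left, sq]; omega
  · have := mul_add_lt_mul_self hr hc
    exact Nat.not_dvd_of_pos_of_lt (by simp [arrayEntry]) (by rw [arrayEntry_mul_left, sq]; omega)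
  · obtain ⟨r, hr, c, hc, hrc⟩ := exists_lt_mul_add_eq (n := n) (i := X - 1) (by rw [← sq]; omega)
    exact ⟨r, hr, c, hc, by rw [arrayEntry_mul_left]; omega⟩

theorem isDifferenceArray_two_mul {n : ℕ} (hn : 0 < n) :
    IsDifferenceArray (2 * n ^ 2 + 2 * n) (2 * n ^ 2 / (2 * n) + 1) n (n + 1) 1 := by
  rw [sq, ← mul_assoc, Nat.mul_div_cancel_left _ (by omega)]
  refine .of_lt_half (h := (n + 1) * n) (by ring) (dvd_mul_right _ _) (by omega) one_pos
    (by omega) (fun r hr c hc => ?_) (fun r hr c hc => ?_) fun X hX hXh hXm => ?_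
  · have := Nat.mul_le_mul_left (n + 1) hr
    rw [arrayEntry]; nlinarith
  · rw [arrayEntry, add_assoc, Nat.dvd_add_right (dvd_mul_right _ _)]
    exact Nat.not_dvd_of_pos_of_lt (by omega) (by omega)
  · have hmod : X % (n + 1) ≠ 0 := fun h => hXm (Nat.dvd_of_mod_eq_zero h)
    refine ⟨X / (n + 1), Nat.div_lt_of_lt_mul hXh, X % (n + 1) - 1,
      by have := Nat.mod_lt X (by omega : 0 < n + 1); omega, ?_⟩
    have := Nat.div_add_mod X (n + 1)
    rw [arrayEntry]; omega

theorem isDifferenceArray_sq {n : ℕ} (hn : 0 < n) :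
    IsDifferenceArray (2 * n ^ 2 + n ^ 2) (2 * n ^ 2 / n ^ 2 + 1) n (3 * n) 3 := by
  rw [Nat.mul_div_cancel _ (by positivity)]
  exact {
    dvd := ⟨n ^ 2, by ring⟩
    pos_left := by omega
    pos_right := by omega
    mul_lt := fun c hc => by omega
    entry_lt := fun r hr c hc => by
      have := mul_add_lt_mul_self hr hc
      rw [arrayEntry_mul_left, sq]; omega
    not_dvd_entry := fun r hr c hc => by rw [arrayEntry_mul_left]; omega
    entry_add_entry_ne := fun r hr c hc r' hr' c' hc' => by
      rw [arrayEntry_mul_left, arrayEntry_mul_left, sq]; omega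
    exists_entry := fun X hX hXv hXm => by
      rcases (by omega : X % 3 = 1 ∨ X % 3 = 2) with h | h
      · obtain ⟨r, hr, c, hc, hrc⟩ := exists_lt_mul_add_eq (n := n) (i := X / 3)
          (by rw [sq] at hXv; omega)
        exact ⟨r, hr, c, hc, Or.inl (by rw [arrayEntry_mul_left, hrc]; omega)⟩
      · obtain ⟨r, hr, c, hc, hrc⟩ :=
          exists_lt_mul_add_eq (n := n) (i := (2 * n ^ 2 + n ^ 2 - X) / 3)
          (by rw [sq] at hXv ⊢; omega)
        exact ⟨r, hr, c, hc, Or.inr (by rw [arrayEntry_mul_left, hrc]; omega)⟩ }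

theorem isDifferenceArray_two_mul_sq {n : ℕ} (hn : 0 < n) :
    IsDifferenceArray (2 * n ^ 2 + 2 * n ^ 2) (2 * n ^ 2 / (2 * n ^ 2) + 1) n (2 * n) 2 := by
  rw [Nat.div_self (by positivity)]
  refine .of_lt_half (h := 2 * n ^ 2) (by ring) (dvd_mul_right _ _) (by omega) two_pos
    (by omega) (fun r hr c hc => ?_) (fun r hr c hc => ?_) fun X hX hXh hXm => ?_
  · have := mul_add_lt_mul_self hr hc
    rw [arrayEntry_mul_left, sq]; omega
  · rw [arrayEntry_mul_left]; omega
  · obtain ⟨r, hr, c, hc, hrc⟩ := exists_lt_mul_add_eq (n := n) (i := X / 2)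
      (by rw [sq] at hXh; omega)
    exact ⟨r, hr, c, hc, by rw [arrayEntry_mul_left, hrc]; omega⟩

theorem stmt14_general (n t : ℕ)
    (ht : t = 2 ∨ t = 2 * n ∨ t = n ^ 2 ∨ t = 2 * n ^ 2)
    (J : Set (ZMod (2 * n ^ 2 + t)))
    (hJ : J = {x : ZMod (2 * n ^ 2 + t) |
      ∃ y : ZMod (2 * n ^ 2 + t), x = ((2 * n ^ 2 / t + 1 : ℕ) : ZMod (2 * n ^ 2 + t)) * y}) :
    ∃ D D' : Set (Fin (n + 1) → ZMod (2 * n ^ 2 + t)),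
      -- every member of D (resp. D') is a path of length n in K
      (∀ p ∈ D, Function.Injective p ∧
        ∀ k : Fin n, p k.castSucc - p k.succ ∉ J) ∧
      (∀ p ∈ D', Function.Injective p ∧
        ∀ k : Fin n, p k.castSucc - p k.succ ∉ J) ∧
      -- every edge of K belongs to exactly one member of D (resp. of D')
      (∀ x y : ZMod (2 * n ^ 2 + t), x ≠ y → x - y ∉ J →
        ∃! p, p ∈ D ∧ ∃ k : Fin n, s(x, y) = s(p k.castSucc, p k.succ)) ∧
      (∀ x y : ZMod (2 * n ^ 2 + t), x ≠ y → x - y ∉ J →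
        ∃! p, p ∈ D' ∧ ∃ k : Fin n, s(x, y) = s(p k.castSucc, p k.succ)) ∧
      -- both decompositions are cyclic
      (∀ p ∈ D, (fun k => p k + 1) ∈ D) ∧
      (∀ p ∈ D', (fun k => p k + 1) ∈ D') ∧
      -- orthogonality: any path of D and any path of D' share at most one edge
      (∀ p ∈ D, ∀ q ∈ D',
        {e : Sym2 (ZMod (2 * n ^ 2 + t)) |
          (∃ k : Fin n, e = s(p k.castSucc, p k.succ)) ∧
          (∃ k : Fin n, e = s(q k.castSucc, q k.succ))}.Subsingleton) := by
  rcases Nat.eq_zero_or_pos n with rfl | hn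
  · have hJ_univ (x) : x ∈ J := by rw [hJ]; exact ⟨x, by simp⟩
    exact ⟨∅, ∅, by simp, by simp, fun x y _ h => absurd (hJ_univ _) h,
      fun x y _ h => absurd (hJ_univ _) h, by simp, by simp, by simp⟩
  have : NeZero (2 * n ^ 2 + t) := ⟨by positivity⟩
  obtain ⟨A, B, H⟩ : ∃ A B, IsDifferenceArray (2 * n ^ 2 + t) (2 * n ^ 2 / t + 1) n A B := by
    rcases ht with rfl | rfl | rfl | rfl
    exacts [⟨_, _, isDifferenceArray_two hn⟩, ⟨_, _, isDifferenceArray_two_mul hn⟩,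
      ⟨_, _, isDifferenceArray_sq hn⟩, ⟨_, _, isDifferenceArray_two_mul_sq hn⟩]
  obtain ⟨D, D', ⟨hD, hDcover⟩, ⟨hD', hD'cover⟩, hcyc, hcyc', horth⟩ := H.exists_orthogonal J hJ
  exact ⟨D, D', hD, hD', hDcover, hD'cover, fun p hp => hcyc p hp 1, fun p hp => hcyc' p hp 1,
    horth⟩

/-- Proposition 4.3: for every odd n ≥ 1 and every t ∈ {2, 2n, n², 2n²}, there exists a pair of
orthogonal cyclic P_n-decompositions of the complete multipartite graph
K_{((2n²+t)/t)×t}, realized on vertex set Z_{2n²+t} (vertices x, y adjacent iff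
x − y ∉ J, where J is the order-t subgroup of multiples of v/t = 2n²/t + 1).
A path with n edges is encoded as an injective map p : Fin (n+1) → Z_{2n²+t} whose
consecutive vertices are adjacent; its edges are the unordered pairs
s(p k, p (k+1)). -/
theorem stmt14 (n t : ℕ) (hn : 1 ≤ n) (hodd : Odd n)
    (ht : t = 2 ∨ t = 2 * n ∨ t = n ^ 2 ∨ t = 2 * n ^ 2)
    (J : Set (ZMod (2 * n ^ 2 + t)))
    (hJ : J = {x : ZMod (2 * n ^ 2 + t) |
      ∃ y : ZMod (2 * n ^ 2 + t), x = ((2 * n ^ 2 / t + 1 : ℕ) : ZMod (2 * n ^ 2 + t)) * y}) :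
    ∃ D D' : Set (Fin (n + 1) → ZMod (2 * n ^ 2 + t)),
      -- every member of D (resp. D') is a path of length n in K
      (∀ p ∈ D, Function.Injective p ∧
        ∀ k : Fin n, p k.castSucc - p k.succ ∉ J) ∧
      (∀ p ∈ D', Function.Injective p ∧
        ∀ k : Fin n, p k.castSucc - p k.succ ∉ J) ∧
      -- every edge of K belongs to exactly one member of D (resp. of D')
      (∀ x y : ZMod (2 * n ^ 2 + t), x ≠ y → x - y ∉ J →
        ∃! p, p ∈ D ∧ ∃ k : Fin n, s(x, y) = s(p k.castSucc, p k.succ)) ∧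
      (∀ x y : ZMod (2 * n ^ 2 + t), x ≠ y → x - y ∉ J →
        ∃! p, p ∈ D' ∧ ∃ k : Fin n, s(x, y) = s(p k.castSucc, p k.succ)) ∧
      -- both decompositions are cyclic
      (∀ p ∈ D, (fun k => p k + 1) ∈ D) ∧
      (∀ p ∈ D', (fun k => p k + 1) ∈ D') ∧
      -- orthogonality: any path of D and any path of D' share at most one edge
      (∀ p ∈ D, ∀ q ∈ D',
        {e : Sym2 (ZMod (2 * n ^ 2 + t)) |
          (∃ k : Fin n, e = s(p k.castSucc, p k.succ)) ∧
          (∃ k : Fin n, e = s(q k.castSucc, q k.succ))}.Subsingleton) :=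
  stmt14_general n t ht J hJ
end

section
/- Let n be an odd prime and let A = (a_{i,j}) be the n×n matrix over Z_{2n²+2n} defined by a_{i,j} = i + (n+1)(j−1) when i ≡ j (mod 2) and a_{i,j} = n² + n − i − (n+1)(j−1) when i ≢ j (mod 2). Then for every j ∈ [1,n] the additive order in Z_{2n(n+1)} of the sum of the entries of column j is 4 if j = (n+1)/2 and is 4n otherwise; and for every i ∈ [1,n] the additive order in Z_{2n(n+1)} of the sum of the entries of row i is 4 if i = (n+1)/2 and is a multiple of n otherwise. (This is the key computational claim underlying the paper's biembedding of K_{(n+1)×2n} whose faces have length 4n or a multiple of n².) -/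
/-!
Write `n = 2k + 1`, so that the modulus is `4n(k + 1)`. Over `ℤ` the entry `a i j` is
`(-1)^(i+j) (i + (n+1)(j-1)) + (1 - (-1)^(i+j)) n(k+1)`, so row and column sums are alternating
sums with closed forms: column `j` sums to `n²(k+1) + (-1)^j 2(k+1)(k+1-j)` and row `i` to
`n²(k+1) + (-1)^i (k+1-i)`. At the centre both equal `n(k+1) · n`, of order `4`. Off the centre
the column sum is `k + 1` times an odd number prime to `n`, hence of order `4n`, and the row sum
is not divisible by `n`, so `n` divides its order.
-/

open Finset

theorem sum_Icc_alternating {R : Type*} [CommRing R] (α β γ : R) (k : ℕ) :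
    ∑ i ∈ Icc 1 (2 * k + 1), (α + β * (-1) ^ i + γ * ((-1) ^ i * i))
      = (2 * k + 1) * α - β - (k + 1) * γ := by
  induction k with
  | zero => simp [sub_eq_add_neg]
  | succ k ih =>
    rw [show 2 * (k + 1) + 1 = 2 * k + 1 + 1 + 1 by ring,
      sum_Icc_succ_top (by omega), sum_Icc_succ_top (by omega), ih,
      Even.neg_one_pow ⟨k + 1, by ring⟩, Odd.neg_one_pow ⟨k + 1, by ring⟩]
    push_cast
    ring

theorem ite_mod_two_eq_neg_one_pow {R : Type*} [CommRing R] (i j : ℕ) (b c : R) :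
    (if i % 2 = j % 2 then b else 2 * c - b) = (-1) ^ (i + j) * b + (1 - (-1) ^ (i + j)) * c := by
  split_ifs with h
  · rw [Even.neg_one_pow (by rw [Nat.even_add, Nat.even_iff, Nat.even_iff]; omega)]
    ring
  · rw [Odd.neg_one_pow (by rw [Nat.odd_add, Nat.odd_iff, Nat.even_iff]; omega)]
    ring

def nhEntry (n i j : ℕ) : ℤ :=
  if i % 2 = j % 2 then i + (n + 1) * (j - 1) else n ^ 2 + n - i - (n + 1) * (j - 1)

theorem nhEntry_eq_neg_one_pow (k i j : ℕ) :
    nhEntry (2 * k + 1) i j = (-1) ^ (i + j) * (i + (2 * k + 2) * (j - 1))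
      + (1 - (-1) ^ (i + j)) * ((2 * k + 1) * (k + 1)) := by
  rw [← ite_mod_two_eq_neg_one_pow, nhEntry]
  push_cast
  ring_nf

theorem sum_nhEntry_col (k j : ℕ) :
    ∑ i ∈ Icc 1 (2 * k + 1), nhEntry (2 * k + 1) i j
      = (2 * k + 1) ^ 2 * (k + 1) + (-1) ^ j * (2 * (k + 1) * (k + 1 - j)) := by
  calc ∑ i ∈ Icc 1 (2 * k + 1), nhEntry (2 * k + 1) i j
      = ∑ i ∈ Icc 1 (2 * k + 1), ((2 * k + 1) * (k + 1)
          + (-1) ^ j * ((2 * k + 2) * (j - 1) - (2 * k + 1) * (k + 1)) * (-1) ^ i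
          + (-1) ^ j * ((-1) ^ i * i) : ℤ) :=
        sum_congr rfl fun i _ => by rw [nhEntry_eq_neg_one_pow, pow_add]; ring
    _ = _ := by rw [sum_Icc_alternating]; ring

theorem sum_nhEntry_row (k i : ℕ) :
    ∑ j ∈ Icc 1 (2 * k + 1), nhEntry (2 * k + 1) i j
      = (2 * k + 1) ^ 2 * (k + 1) + (-1) ^ i * (k + 1 - i) := by
  calc ∑ j ∈ Icc 1 (2 * k + 1), nhEntry (2 * k + 1) i j
      = ∑ j ∈ Icc 1 (2 * k + 1), ((2 * k + 1) * (k + 1)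
          + (-1) ^ i * (i - (2 * k + 2) - (2 * k + 1) * (k + 1)) * (-1) ^ j
          + (-1) ^ i * (2 * k + 2) * ((-1) ^ j * j) : ℤ) :=
        sum_congr rfl fun j _ => by rw [nhEntry_eq_neg_one_pow, pow_add]; ring
    _ = _ := by rw [sum_Icc_alternating]; ring

theorem Int.not_dvd_mul_add_neg_one_pow_mul {n d : ℤ} (c : ℤ) (e : ℕ) (hd : d ≠ 0)
    (hdn : |d| < n) : ¬ n ∣ n * c + (-1) ^ e * d := by
  rw [dvd_add_right (dvd_mul_right n c), (isUnit_neg_one.pow e).dvd_mul_left]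
  exact fun h => hd (Int.eq_zero_of_abs_lt_dvd h hdn)

theorem Int.isCoprime_four_of_odd {a : ℤ} (ha : Odd a) : IsCoprime a 4 := by
  simpa using (Int.isCoprime_two_right.mpr ha).pow_right (n := 2)

theorem addOrderOf_intCast_mul {v m b : ℕ} (hv : v = m * b) (hm : m ≠ 0) {a : ℤ}
    (hab : IsCoprime a b) : addOrderOf ((m * a : ℤ) : ZMod v) = b := by
  have nsmul_eq_zero_iff (d : ℕ) : d • ((m * a : ℤ) : ZMod v) = 0 ↔ (b : ℤ) ∣ d * a := by
    rw [nsmul_eq_mul, ← Int.cast_natCast, ← Int.cast_mul, ZMod.intCast_zmod_eq_zero_iff_dvd,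
      hv, Nat.cast_mul, mul_left_comm, mul_dvd_mul_iff_left (by exact_mod_cast hm)]
  apply Nat.dvd_antisymm
  · exact addOrderOf_dvd_of_nsmul_eq_zero ((nsmul_eq_zero_iff b).mpr (dvd_mul_right _ _))
  · have h := (nsmul_eq_zero_iff _).mp (addOrderOf_nsmul_eq_zero ((m * a : ℤ) : ZMod v))
    exact Int.natCast_dvd_natCast.mp (hab.symm.dvd_of_dvd_mul_right h)

theorem dvd_addOrderOf_intCast {p v : ℕ} (hp : p.Prime) (hpv : p ∣ v) {t : ℤ}
    (ht : ¬ (p : ℤ) ∣ t) : p ∣ addOrderOf (t : ZMod v) := by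
  have h := addOrderOf_nsmul_eq_zero (t : ZMod v)
  rw [nsmul_eq_mul, ← Int.cast_natCast, ← Int.cast_mul, ZMod.intCast_zmod_eq_zero_iff_dvd] at h
  rcases (Nat.prime_iff_prime_int.mp hp).dvd_or_dvd ((Int.natCast_dvd_natCast.mpr hpv).trans h)
    with h | h
  · exact Int.natCast_dvd_natCast.mp h
  · exact absurd h ht

theorem addOrderOf_center (k : ℕ) :
    addOrderOf (((2 * k + 1) ^ 2 * (k + 1) : ℤ) : ZMod (2 * (2 * k + 1) ^ 2 + 2 * (2 * k + 1)))
      = 4 := by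
  have h := addOrderOf_intCast_mul (v := 2 * (2 * k + 1) ^ 2 + 2 * (2 * k + 1))
    (m := (2 * k + 1) * (k + 1)) (by ring) (by positivity)
    (Int.isCoprime_four_of_odd (a := 2 * k + 1) (odd_two_mul_add_one _))
  convert h using 3
  push_cast
  ring

theorem addOrderOf_colSum_of_ne_center {k j : ℕ} (hp : (2 * k + 1).Prime)
    (hj : 1 ≤ j ∧ j ≤ 2 * k + 1) (hjk : j ≠ k + 1) :
    addOrderOf (((2 * k + 1) ^ 2 * (k + 1) + (-1) ^ j * (2 * (k + 1) * (k + 1 - j)) : ℤ)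
      : ZMod (2 * (2 * k + 1) ^ 2 + 2 * (2 * k + 1))) = 4 * (2 * k + 1) := by
  set a : ℤ := (2 * k + 1) * (2 * k + 1) + (-1) ^ j * (2 * (k + 1 - j))
  have ha_odd : Odd a :=
    ((odd_two_mul_add_one (k : ℤ)).mul (odd_two_mul_add_one _)).add_even
      ((even_two_mul _).mul_left _)
  have hna : ¬ (2 * k + 1 : ℤ) ∣ a :=
    Int.not_dvd_mul_add_neg_one_pow_mul _ _ (by omega) (by rw [abs_lt]; omega)
  have hcop : IsCoprime a ((4 * (2 * k + 1) : ℕ) : ℤ) := by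
    push_cast
    refine (Int.isCoprime_four_of_odd ha_odd).mul_right ?_
    have hp' := Nat.prime_iff_prime_int.mp hp
    push_cast at hp'
    exact (hp'.coprime_iff_not_dvd.mpr hna).symm
  convert addOrderOf_intCast_mul (v := 2 * (2 * k + 1) ^ 2 + 2 * (2 * k + 1)) (m := k + 1)
    (by ring) (by omega) hcop using 3
  push_cast
  ring

theorem dvd_addOrderOf_rowSum_of_ne_center {k i : ℕ} (hp : (2 * k + 1).Prime)
    (hi : 1 ≤ i ∧ i ≤ 2 * k + 1) (hik : i ≠ k + 1) :
    2 * k + 1 ∣ addOrderOf (((2 * k + 1) ^ 2 * (k + 1) + (-1) ^ i * (k + 1 - i) : ℤ)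
      : ZMod (2 * (2 * k + 1) ^ 2 + 2 * (2 * k + 1))) := by
  refine dvd_addOrderOf_intCast hp ⟨2 * (2 * k + 1) + 2, by ring⟩ ?_
  rw [show ((2 * k + 1) ^ 2 * (k + 1) : ℤ) = (2 * k + 1) * ((2 * k + 1) * (k + 1)) by ring]
  push_cast
  exact Int.not_dvd_mul_add_neg_one_pow_mul _ _ (by omega) (by rw [abs_lt]; omega)

/-- Proposition 5.9 (key computation): for the matrix of the globally simple
NH_{2n}(n;n) over Z_{2n(n+1)}, n an odd prime, the additive order of the sum of
column j is 4 if j = (n+1)/2 and 4n otherwise, and the additive order of the sum of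
row i is 4 if i = (n+1)/2 and a multiple of n otherwise. -/
theorem stmt16 (n : ℕ) (hp : n.Prime) (hodd : Odd n)
    (A : ℕ → ℕ → ZMod (2 * n ^ 2 + 2 * n))
    (hA : ∀ i ∈ Finset.Icc 1 n, ∀ j ∈ Finset.Icc 1 n,
      (i % 2 = j % 2 →
        A i j = (((i : ℤ) + ((n : ℤ) + 1) * ((j : ℤ) - 1) : ℤ) : ZMod (2 * n ^ 2 + 2 * n))) ∧
      (i % 2 ≠ j % 2 →
        A i j = (((n : ℤ) ^ 2 + n - i - ((n : ℤ) + 1) * ((j : ℤ) - 1) : ℤ)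
          : ZMod (2 * n ^ 2 + 2 * n)))) :
    (∀ j ∈ Finset.Icc 1 n,
      (j = (n + 1) / 2 → addOrderOf (∑ i ∈ Finset.Icc 1 n, A i j) = 4) ∧
      (j ≠ (n + 1) / 2 → addOrderOf (∑ i ∈ Finset.Icc 1 n, A i j) = 4 * n)) ∧
    (∀ i ∈ Finset.Icc 1 n,
      (i = (n + 1) / 2 → addOrderOf (∑ j ∈ Finset.Icc 1 n, A i j) = 4) ∧
      (i ≠ (n + 1) / 2 → n ∣ addOrderOf (∑ j ∈ Finset.Icc 1 n, A i j))) := by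
  obtain ⟨k, rfl⟩ := hodd
  have hmid : (2 * k + 1 + 1) / 2 = k + 1 := by omega
  have hA_entry : ∀ i ∈ Icc 1 (2 * k + 1), ∀ j ∈ Icc 1 (2 * k + 1),
      A i j = (nhEntry (2 * k + 1) i j : ZMod _) := by
    intro i hi j hj
    unfold nhEntry
    split_ifs with h
    · exact (hA i hi j hj).1 h
    · exact (hA i hi j hj).2 h
  have hcol (j) (hj : j ∈ Icc 1 (2 * k + 1)) : ∑ i ∈ Icc 1 (2 * k + 1), A i j
      = (((2 * k + 1) ^ 2 * (k + 1) + (-1) ^ j * (2 * (k + 1) * (k + 1 - j)) : ℤ) : ZMod _) := by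
    rw [← sum_nhEntry_col, Int.cast_sum]
    exact sum_congr rfl fun i hi => hA_entry i hi j hj
  have hrow (i) (hi : i ∈ Icc 1 (2 * k + 1)) : ∑ j ∈ Icc 1 (2 * k + 1), A i j
      = (((2 * k + 1) ^ 2 * (k + 1) + (-1) ^ i * (k + 1 - i) : ℤ) : ZMod _) := by
    rw [← sum_nhEntry_row, Int.cast_sum]
    exact sum_congr rfl fun j hj => hA_entry i hi j hj
  refine ⟨fun j hj => ⟨fun hj' => ?_, fun hj' => ?_⟩, fun i hi => ⟨fun hi' => ?_, fun hi' => ?_⟩⟩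
  · rw [hmid] at hj'
    subst hj'
    rw [hcol _ hj]
    simpa using addOrderOf_center k
  · rw [hcol j hj]
    exact addOrderOf_colSum_of_ne_center hp (mem_Icc.mp hj) (hmid ▸ hj')
  · rw [hmid] at hi'
    subst hi'
    rw [hrow _ hi]
    simpa using addOrderOf_center k
  · rw [hrow i hi]
    exact dvd_addOrderOf_rowSum_of_ne_center hp (mem_Icc.mp hi) (hmid ▸ hi')
end

section
/- Let n be an odd prime and let A = (a_{i,j}) be the n×n matrix over Z_{4n²} defined by: a_{i,j} = 2n(j−1) + 2i − 1 if i ≡ j (mod 2) and 1 ≤ j ≤ (n+1)/2; a_{i,j} = 2n(n−j+1) − 2i + 1 if i ≢ j (mod 2) and 1 ≤ j ≤ (n+1)/2; a_{i,j} = 2nj − 2i + 1 if i ≡ j (mod 2) and (n+3)/2 ≤ j ≤ n; a_{i,j} = 2n(n−j) + 2i − 1 if i ≢ j (mod 2) and (n+3)/2 ≤ j ≤ n. Then for every j ∈ [1,n] the additive order in Z_{4n²} of the sum of the entries of column j is 4 if j = (n+1)/2 and is 4n otherwise; and for every i ∈ [1,n] the additive order in Z_{4n²} of the sum of the entries of row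 i is 4 if i = (n+1)/2 and is 4n² otherwise. (This is the key computational claim underlying the paper's biembedding of K_{2×2n²} whose faces have length 4n, 4n² or 4n³.) -/
/-!
In centred coordinates `ĩ = 2i - n - 1` the matrix is `a i j = n² + (-1)^(i+j) (n ĵ + σ_j ĩ)`,
where `σ_j = ±1` according to whether `j ≤ (n+1)/2`. The reflection `i ↦ n + 1 - i` preserves
parity and negates `ĩ`, so `∑ (-1)^i ĩ = 0`, while `∑ (-1)^j σ_j = (-1)^((n+1)/2)` and
`∑ (-1)^i = -1`. Hence column `j` sums to `n (n² ± ĵ)` and row `i` to `n³ ± ĩ`. For the middle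
index this is `n³`, of order `4` in `ℤ/4n²`; otherwise `±ĩ` is even, nonzero and smaller than `n`
in absolute value, so `n² ± ĵ` and `n³ ± ĩ` are prime to `2n`, giving orders `4n` and `4n²`.
-/

open Finset

theorem sum_Icc_one_reflect {M : Type*} [AddCommMonoid M] (f : ℕ → M) (n : ℕ) :
    ∑ i ∈ Icc 1 n, f (n + 1 - i) = ∑ i ∈ Icc 1 n, f i :=
  sum_nbij' (fun i => n + 1 - i) (fun i => n + 1 - i)
    (fun i hi => by simp only [mem_Icc] at hi ⊢; omega)
    (fun i hi => by simp only [mem_Icc] at hi ⊢; omega)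
    (fun i hi => by simp only [mem_Icc] at hi; omega)
    (fun i hi => by simp only [mem_Icc] at hi; omega) (fun _ _ => rfl)

theorem sum_Icc_one_neg_one_pow_of_odd {n : ℕ} (hn : Odd n) :
    ∑ i ∈ Icc 1 n, (-1 : ℤ) ^ i = -1 := by
  obtain ⟨k, rfl⟩ := hn
  induction k with
  | zero => simp
  | succ k ih =>
    rw [show 2 * (k + 1) + 1 = 2 * k + 1 + 1 + 1 by ring, sum_Icc_succ_top (by omega),
      sum_Icc_succ_top (by omega), ih, pow_succ, pow_succ]
    ring

theorem neg_one_pow_reflect {n i : ℕ} (hn : Odd n) (hi : i ≤ n + 1) :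
    (-1 : ℤ) ^ (n + 1 - i) = (-1) ^ i := by
  obtain ⟨k, rfl⟩ := hn
  rw [neg_one_pow_eq_pow_mod_two, neg_one_pow_eq_pow_mod_two (n := i)]
  congr 1
  omega

theorem addOrderOf_intCast_mul_of_isCoprime {N d m : ℕ} (hN : d * m = N) (hd : d ≠ 0) {T : ℤ}
    (hT : IsCoprime T m) : addOrderOf ((d * T : ℤ) : ZMod N) = m := by
  subst hN
  have hzero : ∀ k : ℕ, k • ((d * T : ℤ) : ZMod (d * m)) = 0 ↔ (m : ℤ) ∣ k * T := fun k => by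
    rw [nsmul_eq_mul, ← Int.cast_natCast, ← Int.cast_mul, ZMod.intCast_zmod_eq_zero_iff_dvd,
      Nat.cast_mul, mul_left_comm, mul_dvd_mul_iff_left (by exact_mod_cast hd)]
  apply Nat.dvd_antisymm
  · exact addOrderOf_dvd_iff_nsmul_eq_zero.mpr ((hzero m).mpr (dvd_mul_right _ _))
  · have h := (hzero _).mp (addOrderOf_nsmul_eq_zero ((d * T : ℤ) : ZMod (d * m)))
    exact Int.natCast_dvd_natCast.mp (hT.symm.dvd_of_dvd_mul_right h)

theorem isCoprime_four_mul_pow {p : ℕ} (hp : p.Prime) {x : ℤ} (hx : Odd x) (hpx : ¬ (p : ℤ) ∣ x)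
    (e : ℕ) : IsCoprime x ((4 * p ^ e : ℕ) : ℤ) := by
  have h2 : IsCoprime x 2 := Int.isCoprime_two_right.mpr hx
  have hp' : IsCoprime x p := ((Nat.prime_iff_prime_int.mp hp).coprime_iff_not_dvd.mpr hpx).symm
  push_cast
  rw [show (4 : ℤ) = 2 ^ 2 by norm_num]
  exact h2.pow_right.mul_right hp'.pow_right

theorem isCoprime_pow_add {p : ℕ} (hp : p.Prime) (hodd : Odd p) {δ : ℤ} (hδ : Even δ)
    (hδ0 : δ ≠ 0) (hδp : |δ| < p) {e : ℕ} (he : e ≠ 0) (k : ℕ) :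
    IsCoprime ((p : ℤ) ^ e + δ) ((4 * p ^ k : ℕ) : ℤ) := by
  refine isCoprime_four_mul_pow hp (((Int.odd_coe_nat p).mpr hodd).pow.add_even hδ) (fun h => ?_) k
  exact hδ0 (Int.eq_zero_of_abs_lt_dvd ((dvd_add_right (dvd_pow_self _ he)).mp h) hδp)

theorem addOrderOf_cube {n : ℕ} (hn : Odd n) :
    addOrderOf (((n : ℤ) ^ 3 : ℤ) : ZMod (4 * n ^ 2)) = 4 := by
  have h4 : IsCoprime (n : ℤ) ((4 : ℕ) : ℤ) := by
    rw [show ((4 : ℕ) : ℤ) = 2 ^ 2 by norm_num]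
    exact (Int.isCoprime_two_right.mpr ((Int.odd_coe_nat n).mpr hn)).pow_right
  have h := addOrderOf_intCast_mul_of_isCoprime (N := 4 * n ^ 2) (by ring)
    (pow_ne_zero 2 hn.pos.ne') h4
  convert h using 3
  push_cast
  ring

namespace NHMatrix

def centre (n i : ℕ) : ℤ := 2 * i - n - 1

def side (n j : ℕ) : ℤ := if j ≤ (n + 1) / 2 then 1 else -1

/-- The paper's `a_{i,j}` as an integer; `entry_eq` recovers its four case formulas. -/
def entry (n i j : ℕ) : ℤ :=
  n ^ 2 + (-1) ^ (i + j) * (n * centre n j + side n j * centre n i)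

variable {n : ℕ}

theorem centre_reflect {i : ℕ} (hi : i ≤ n + 1) : centre n (n + 1 - i) = -centre n i := by
  unfold centre; push_cast [hi]; ring

theorem even_centre (hn : Odd n) (i : ℕ) : Even (centre n i) := by
  obtain ⟨k, rfl⟩ := hn
  exact ⟨i - k - 1, by unfold centre; push_cast; ring⟩

theorem abs_centre_lt {i : ℕ} (hi : i ∈ Icc 1 n) : |centre n i| < n := by
  simp only [mem_Icc] at hi
  unfold centre; rw [abs_lt]; omega

theorem centre_eq_zero_iff (hn : Odd n) {i : ℕ} : centre n i = 0 ↔ i = (n + 1) / 2 := by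
  obtain ⟨k, rfl⟩ := hn
  unfold centre; omega

theorem sum_Icc_one_neg_one_pow_mul_centre (hn : Odd n) :
    ∑ i ∈ Icc 1 n, (-1 : ℤ) ^ i * centre n i = 0 := by
  have h := sum_Icc_one_reflect (fun i => (-1 : ℤ) ^ i * centre n i) n
  rw [sum_congr rfl fun i hi => by
    have hi : i ≤ n + 1 := by simp only [mem_Icc] at hi; omega
    rw [neg_one_pow_reflect hn hi, centre_reflect hi]] at h
  simp only [mul_neg, sum_neg_distrib] at h
  linarith

theorem side_add_side_reflect (hn : Odd n) {j : ℕ} (hj : j ∈ Icc 1 n) :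
    side n j + side n (n + 1 - j) = if j = (n + 1) / 2 then 2 else 0 := by
  obtain ⟨k, rfl⟩ := hn
  simp only [mem_Icc] at hj
  unfold side
  split_ifs <;> omega

theorem sum_Icc_one_neg_one_pow_mul_side (hn : Odd n) :
    ∑ j ∈ Icc 1 n, (-1 : ℤ) ^ j * side n j = (-1) ^ ((n + 1) / 2) := by
  have h := sum_Icc_one_reflect (fun j => (-1 : ℤ) ^ j * side n j) n
  have hpair : ∀ j ∈ Icc 1 n, (-1 : ℤ) ^ j * side n j + (-1) ^ (n + 1 - j) * side n (n + 1 - j)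
      = if j = (n + 1) / 2 then 2 * (-1) ^ ((n + 1) / 2) else 0 := fun j hj => by
    rw [neg_one_pow_reflect hn (by simp only [mem_Icc] at hj; omega), ← mul_add,
      side_add_side_reflect hn hj]
    split_ifs with h <;> simp [h, mul_comm]
  have hmem : (n + 1) / 2 ∈ Icc 1 n := by obtain ⟨k, rfl⟩ := hn; simp only [mem_Icc]; omega
  have := sum_congr rfl hpair
  rw [sum_add_distrib, h, sum_ite_eq' _ _ _, if_pos hmem] at this
  linarith

theorem entry_eq (n i j : ℕ) : entry n i j =
    if i % 2 = j % 2 then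
      if j ≤ (n + 1) / 2 then 2 * (n : ℤ) * ((j : ℤ) - 1) + 2 * (i : ℤ) - 1
      else 2 * (n : ℤ) * j - 2 * (i : ℤ) + 1
    else
      if j ≤ (n + 1) / 2 then 2 * (n : ℤ) * ((n : ℤ) - j + 1) - 2 * (i : ℤ) + 1
      else 2 * (n : ℤ) * ((n : ℤ) - j) + 2 * (i : ℤ) - 1 := by
  have hsign : (-1 : ℤ) ^ (i + j) = if i % 2 = j % 2 then 1 else -1 := by
    rw [neg_one_pow_eq_pow_mod_two]
    split_ifs with h
    · rw [show (i + j) % 2 = 0 by omega, pow_zero]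
    · rw [show (i + j) % 2 = 1 by omega, pow_one]
  unfold entry centre side
  rw [hsign]
  split_ifs <;> ring

theorem sum_entry_col (hn : Odd n) (j : ℕ) :
    ∑ i ∈ Icc 1 n, entry n i j = n * (n ^ 2 + (-1) ^ (j + 1) * centre n j) := by
  have hsplit : ∀ i, entry n i j = n ^ 2 + (-1) ^ j * n * centre n j * (-1) ^ i
      + (-1) ^ j * side n j * ((-1) ^ i * centre n i) := fun i => by
    unfold entry; ring
  simp only [hsplit, sum_add_distrib, ← mul_sum, sum_Icc_one_neg_one_pow_of_odd hn,
    sum_Icc_one_neg_one_pow_mul_centre hn, sum_const, Nat.card_Icc, add_tsub_cancel_right,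
    nsmul_eq_mul, mul_zero, add_zero]
  ring

theorem sum_entry_row (hn : Odd n) (i : ℕ) :
    ∑ j ∈ Icc 1 n, entry n i j = n ^ 3 + (-1) ^ (i + (n + 1) / 2) * centre n i := by
  have hsplit : ∀ j, entry n i j = n ^ 2 + (-1) ^ i * n * ((-1) ^ j * centre n j)
      + (-1) ^ i * centre n i * ((-1) ^ j * side n j) := fun j => by
    unfold entry; ring
  simp only [hsplit, sum_add_distrib, ← mul_sum, sum_Icc_one_neg_one_pow_mul_side hn,
    sum_Icc_one_neg_one_pow_mul_centre hn, sum_const, Nat.card_Icc, add_tsub_cancel_right,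
    nsmul_eq_mul, mul_zero, add_zero]
  ring

theorem addOrderOf_mul_sq_add_centre (hp : n.Prime) (hn : Odd n) {j : ℕ} (hj : j ∈ Icc 1 n)
    (k : ℕ) : addOrderOf (((n : ℤ) * (n ^ 2 + (-1) ^ k * centre n j) : ℤ) : ZMod (4 * n ^ 2))
      = if j = (n + 1) / 2 then 4 else 4 * n := by
  split_ifs with hjm
  · rw [(centre_eq_zero_iff hn).mpr hjm, mul_zero, add_zero, ← pow_succ']
    exact addOrderOf_cube hn
  · have h := isCoprime_pow_add (δ := (-1) ^ k * centre n j) hp hn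
      ((even_centre hn j).mul_left _)
      (mul_ne_zero (pow_ne_zero _ (by norm_num)) (mt (centre_eq_zero_iff hn).mp hjm))
      (by rw [abs_mul, abs_neg_one_pow, one_mul]; exact abs_centre_lt hj) two_ne_zero 1
    rw [pow_one] at h
    exact addOrderOf_intCast_mul_of_isCoprime (by ring) hp.ne_zero h

theorem addOrderOf_cube_add_centre (hp : n.Prime) (hn : Odd n) {i : ℕ} (hi : i ∈ Icc 1 n)
    (k : ℕ) : addOrderOf (((n : ℤ) ^ 3 + (-1) ^ k * centre n i : ℤ) : ZMod (4 * n ^ 2))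
      = if i = (n + 1) / 2 then 4 else 4 * n ^ 2 := by
  split_ifs with him
  · rw [(centre_eq_zero_iff hn).mpr him, mul_zero, add_zero]
    exact addOrderOf_cube hn
  · have h := isCoprime_pow_add (δ := (-1) ^ k * centre n i) hp hn
      ((even_centre hn i).mul_left _)
      (mul_ne_zero (pow_ne_zero _ (by norm_num)) (mt (centre_eq_zero_iff hn).mp him))
      (by rw [abs_mul, abs_neg_one_pow, one_mul]; exact abs_centre_lt hi) three_ne_zero 2
    have h' := addOrderOf_intCast_mul_of_isCoprime (N := 4 * n ^ 2) (d := 1) (by ring)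
      one_ne_zero h
    rwa [Nat.cast_one, one_mul] at h'

end NHMatrix

/-- Proposition 5.11 (key computation): for the matrix of the globally simple
NH_{2n²}(n;n) over Z_{4n²}, n an odd prime, the additive order of the sum of column j
is 4 if j = (n+1)/2 and 4n otherwise, and the additive order of the sum of row i is
4 if i = (n+1)/2 and 4n² otherwise. -/
theorem stmt18 (n : ℕ) (hp : n.Prime) (hodd : Odd n)
    (A : ℕ → ℕ → ZMod (4 * n ^ 2))
    (hA : ∀ i ∈ Finset.Icc 1 n, ∀ j ∈ Finset.Icc 1 n,
      (i % 2 = j % 2 → j ≤ (n + 1) / 2 →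
        A i j = ((2 * (n : ℤ) * ((j : ℤ) - 1) + 2 * (i : ℤ) - 1 : ℤ) : ZMod (4 * n ^ 2))) ∧
      (i % 2 ≠ j % 2 → j ≤ (n + 1) / 2 →
        A i j = ((2 * (n : ℤ) * ((n : ℤ) - j + 1) - 2 * (i : ℤ) + 1 : ℤ) : ZMod (4 * n ^ 2))) ∧
      (i % 2 = j % 2 → (n + 3) / 2 ≤ j →
        A i j = ((2 * (n : ℤ) * j - 2 * (i : ℤ) + 1 : ℤ) : ZMod (4 * n ^ 2))) ∧
      (i % 2 ≠ j % 2 → (n + 3) / 2 ≤ j →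
        A i j = ((2 * (n : ℤ) * ((n : ℤ) - j) + 2 * (i : ℤ) - 1 : ℤ) : ZMod (4 * n ^ 2)))) :
    (∀ j ∈ Finset.Icc 1 n,
      (j = (n + 1) / 2 → addOrderOf (∑ i ∈ Finset.Icc 1 n, A i j) = 4) ∧
      (j ≠ (n + 1) / 2 → addOrderOf (∑ i ∈ Finset.Icc 1 n, A i j) = 4 * n)) ∧
    (∀ i ∈ Finset.Icc 1 n,
      (i = (n + 1) / 2 → addOrderOf (∑ j ∈ Finset.Icc 1 n, A i j) = 4) ∧
      (i ≠ (n + 1) / 2 → addOrderOf (∑ j ∈ Finset.Icc 1 n, A i j) = 4 * n ^ 2)) := by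
  have hAe : ∀ i ∈ Icc 1 n, ∀ j ∈ Icc 1 n, A i j = NHMatrix.entry n i j := by
    intro i hi j hj
    obtain ⟨h₁, h₂, h₃, h₄⟩ := hA i hi j hj
    rw [NHMatrix.entry_eq]
    split_ifs with hij hjm hjm
    exacts [h₁ hij hjm, h₃ hij (by omega), h₂ hij hjm, h₄ hij (by omega)]
  refine ⟨fun j hj => ?_, fun i hi => ?_⟩
  · rw [sum_congr rfl fun i hi => hAe i hi j hj, ← Int.cast_sum, NHMatrix.sum_entry_col hodd,
      NHMatrix.addOrderOf_mul_sq_add_centre hp hodd hj]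
    exact ⟨fun h => if_pos h, fun h => if_neg h⟩
  · rw [sum_congr rfl fun j hj => hAe i hi j hj, ← Int.cast_sum, NHMatrix.sum_entry_row hodd,
      NHMatrix.addOrderOf_cube_add_centre hp hodd hi]
    exact ⟨fun h => if_pos h, fun h => if_neg h⟩
end

section
/- Let n ≥ 1 be an odd integer such that 2n+1 is prime, and let A = (a_{i,j}) be the n×n matrix over Z_{2n²+n} defined by a_{i,j} = (−1)^{j+1}·((j−1)(2n+1) + i) when i is odd and a_{i,j} = (−1)^{j+1}·(j(2n+1) − i) when i is even. Then: (a) for every j ∈ [1,n] the sum of the entries of column j equals (−1)^j·n(n+1) in Z_{2n²+n}, and this element has additive order 2n+1; (b) for every odd i ∈ [1,n] the sum of the entries of row i equals i + (n−1)(2n+1)/2 and for every even i ∈ [1,n] it equals (2n+1) − i + (n−1)(2n+1)/2 in Z_{2n²+n}, and in every case this row sum has additive order a multiple of 2n+1 in Z_{2n²+n}. (This is the key computational claim underlying the paper's biembedding of K_{(2n+1)×n} all of whose faces have length a multiple of n(2n+1).) -/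
lemma L1aux (k : ℕ) (a b : ℤ) :
    ∑ i ∈ Finset.Icc 1 (2 * k + 1), (if Odd i then a + (i : ℤ) else b - (i : ℤ))
      = (k + 1) * a + k * b + (k + 1) := by
  induction k with
  | zero => simp
  | succ k ih =>
    have h1 : 2 * (k + 1) + 1 = (2 * k + 1) + 1 + 1 := by ring
    rw [h1, Finset.sum_Icc_succ_top (by omega), Finset.sum_Icc_succ_top (by omega), ih]
    have ho : ¬ Odd (2 * k + 1 + 1) := by simp [Nat.odd_iff]; omega
    have ho2 : Odd (2 * k + 1 + 1 + 1) := by simp [Nat.odd_iff]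
    rw [if_neg ho, if_pos ho2]
    push_cast
    ring

lemma L2aux (k : ℕ) (c d : ℤ) :
    ∑ j ∈ Finset.Icc 1 (2 * k + 1), (-1 : ℤ) ^ (j + 1) * (c + d * (j : ℤ))
      = c + (k + 1) * d := by
  induction k with
  | zero => norm_num
  | succ k ih =>
    have h1 : 2 * (k + 1) + 1 = (2 * k + 1) + 1 + 1 := by ring
    rw [h1, Finset.sum_Icc_succ_top (by omega), Finset.sum_Icc_succ_top (by omega), ih]
    have e1 : (-1 : ℤ) ^ (2 * k + 1 + 1 + 1) = -1 := Odd.neg_one_pow ⟨k + 1, by ring⟩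
    have e2 : (-1 : ℤ) ^ (2 * k + 1 + 1 + 1 + 1) = 1 := Even.neg_one_pow ⟨k + 2, by ring⟩
    rw [e1, e2]
    push_cast
    ring

/-- Proposition 5.12 (key computation): for the array H of Theorem 3.13 with t = n
(so v = n(2n+1)), n odd with 2n+1 prime: every column sum equals (−1)^j·n(n+1) and has
additive order 2n+1, and every row sum equals i + (n−1)(2n+1)/2 (i odd) resp.
(2n+1) − i + (n−1)(2n+1)/2 (i even) and has additive order a multiple of 2n+1. -/
theorem stmt19 (n : ℕ) (hn : 1 ≤ n) (hodd : Odd n) (hp : (2 * n + 1).Prime)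
    (A : ℕ → ℕ → ZMod (2 * n ^ 2 + n))
    (hA : ∀ i ∈ Finset.Icc 1 n, ∀ j ∈ Finset.Icc 1 n,
      (Odd i →
        A i j = (((-1) ^ (j + 1) * (((j : ℤ) - 1) * (2 * (n : ℤ) + 1) + i) : ℤ)
          : ZMod (2 * n ^ 2 + n))) ∧
      (Even i →
        A i j = (((-1) ^ (j + 1) * ((j : ℤ) * (2 * (n : ℤ) + 1) - i) : ℤ)
          : ZMod (2 * n ^ 2 + n)))) :
    (∀ j ∈ Finset.Icc 1 n,
      (∑ i ∈ Finset.Icc 1 n, A i j) =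
        (((-1) ^ j * (n : ℤ) * ((n : ℤ) + 1) : ℤ) : ZMod (2 * n ^ 2 + n)) ∧
      addOrderOf (∑ i ∈ Finset.Icc 1 n, A i j) = 2 * n + 1) ∧
    (∀ i ∈ Finset.Icc 1 n,
      (Odd i →
        (∑ j ∈ Finset.Icc 1 n, A i j) =
          (((i : ℤ) + ((n : ℤ) - 1) * (2 * (n : ℤ) + 1) / 2 : ℤ) : ZMod (2 * n ^ 2 + n))) ∧
      (Even i →
        (∑ j ∈ Finset.Icc 1 n, A i j) =
          ((2 * (n : ℤ) + 1 - i + ((n : ℤ) - 1) * (2 * (n : ℤ) + 1) / 2 : ℤ)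
            : ZMod (2 * n ^ 2 + n))) ∧
      (2 * n + 1) ∣ addOrderOf (∑ j ∈ Finset.Icc 1 n, A i j)) := by
  obtain ⟨k, hk⟩ := hodd
  have hv0 : (2 * n ^ 2 + n) ≠ 0 := by positivity
  haveI : NeZero (2 * n ^ 2 + n) := ⟨hv0⟩
  -- the exact integer division term equals k * (2n+1)
  have hdiv : ((n : ℤ) - 1) * (2 * (n : ℤ) + 1) / 2 = (k : ℤ) * (2 * (n : ℤ) + 1) := by
    have h1 : ((n : ℤ) - 1) * (2 * (n : ℤ) + 1) = 2 * ((k : ℤ) * (2 * (n : ℤ) + 1)) := by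
      have : (n : ℤ) = 2 * k + 1 := by exact_mod_cast congrArg (Nat.cast : ℕ → ℤ) hk
      rw [this]; ring
    rw [h1, Int.mul_ediv_cancel_left _ two_ne_zero]
  constructor
  · -- columns
    intro j hj
    have hsum : (∑ i ∈ Finset.Icc 1 n, A i j) =
        (((-1) ^ j * (n : ℤ) * ((n : ℤ) + 1) : ℤ) : ZMod (2 * n ^ 2 + n)) := by
      have e1 : ∀ i ∈ Finset.Icc 1 n, A i j =
          ((((-1) ^ (j + 1) *
            (if Odd i then ((j : ℤ) - 1) * (2 * (n : ℤ) + 1) + (i : ℤ)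
              else (j : ℤ) * (2 * (n : ℤ) + 1) - (i : ℤ))) : ℤ)
            : ZMod (2 * n ^ 2 + n)) := by
        intro i hi
        obtain ⟨h1, h2⟩ := hA i hi j hj
        rcases Nat.even_or_odd i with he | ho
        · rw [h2 he, if_neg (by simpa [Nat.not_odd_iff_even] using he)]
        · rw [h1 ho, if_pos ho]
      rw [Finset.sum_congr rfl e1, ← Int.cast_sum, ← Finset.mul_sum,
        show Finset.Icc 1 n = Finset.Icc 1 (2 * k + 1) from by rw [hk],
        L1aux k (((j : ℤ) - 1) * (2 * (n : ℤ) + 1)) ((j : ℤ) * (2 * (n : ℤ) + 1))]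
      have hdv : ((2 * n ^ 2 + n : ℕ) : ℤ) ∣
          ((-1) ^ (j + 1) *
            (((k : ℤ) + 1) * (((j : ℤ) - 1) * (2 * (n : ℤ) + 1)) +
              (k : ℤ) * ((j : ℤ) * (2 * (n : ℤ) + 1)) + ((k : ℤ) + 1))
            - (-1) ^ j * (n : ℤ) * ((n : ℤ) + 1)) := by
        refine ⟨(-1) ^ (j + 1) * (j : ℤ), ?_⟩
        have hnz : (n : ℤ) = 2 * (k : ℤ) + 1 := by exact_mod_cast congrArg (Nat.cast : ℕ → ℤ) hk
        push_cast
        rw [hnz]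
        ring
      have h0 : ((((-1) ^ (j + 1) *
            (((k : ℤ) + 1) * (((j : ℤ) - 1) * (2 * (n : ℤ) + 1)) +
              (k : ℤ) * ((j : ℤ) * (2 * (n : ℤ) + 1)) + ((k : ℤ) + 1))
            - (-1) ^ j * (n : ℤ) * ((n : ℤ) + 1) : ℤ)) : ZMod (2 * n ^ 2 + n)) = 0 :=
        (ZMod.intCast_zmod_eq_zero_iff_dvd _ _).mpr hdv
      push_cast at h0 ⊢
      linear_combination h0
    refine ⟨hsum, ?_⟩
    rw [hsum]
    have hgcd : Nat.gcd (2 * n ^ 2 + n) (n * (n + 1)) = n := by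
      have h1 : 2 * n ^ 2 + n = n * (2 * n + 1) := by ring
      have hcop : Nat.Coprime (2 * n + 1) (n + 1) := by
        have h1 := Nat.gcd_dvd_left (2 * n + 1) (n + 1)
        have h2 := Nat.gcd_dvd_right (2 * n + 1) (n + 1)
        have h3 : Nat.gcd (2 * n + 1) (n + 1) ∣ 2 * (n + 1) - (2 * n + 1) :=
          Nat.dvd_sub (h2.mul_left 2) h1
        exact Nat.dvd_one.mp (by simpa [show 2 * (n + 1) - (2 * n + 1) = 1 by omega] using h3)
      rw [h1, Nat.gcd_mul_left, hcop.gcd_eq_one, mul_one]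
    have hord : addOrderOf (((n * (n + 1) : ℕ) : ZMod (2 * n ^ 2 + n))) = 2 * n + 1 := by
      rw [ZMod.addOrderOf_coe _ hv0, hgcd]
      have : 2 * n ^ 2 + n = n * (2 * n + 1) := by ring
      rw [this, Nat.mul_div_cancel_left _ (by omega)]
    rcases Nat.even_or_odd j with he | ho
    · have : (((-1) ^ j * (n : ℤ) * ((n : ℤ) + 1) : ℤ) : ZMod (2 * n ^ 2 + n))
          = (((n * (n + 1) : ℕ) : ZMod (2 * n ^ 2 + n))) := by
        rw [he.neg_one_pow]; push_cast; ring
      rw [this, hord]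
    · have : (((-1) ^ j * (n : ℤ) * ((n : ℤ) + 1) : ℤ) : ZMod (2 * n ^ 2 + n))
          = -(((n * (n + 1) : ℕ) : ZMod (2 * n ^ 2 + n))) := by
        rw [ho.neg_one_pow]; push_cast; ring
      rw [this, addOrderOf_neg, hord]
  · -- rows
    intro i hi
    have hsodd : Odd i → (∑ j ∈ Finset.Icc 1 n, A i j) =
        (((i : ℤ) + (k : ℤ) * (2 * (n : ℤ) + 1) : ℤ) : ZMod (2 * n ^ 2 + n)) := by
      intro hio
      have e1 : ∀ j ∈ Finset.Icc 1 n, A i j =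
          ((((-1) ^ (j + 1) * (((i : ℤ) - (2 * (n : ℤ) + 1)) + (2 * (n : ℤ) + 1) * (j : ℤ))) : ℤ)
            : ZMod (2 * n ^ 2 + n)) := by
        intro j hj
        rw [(hA i hi j hj).1 hio]
        congr 1
        ring
      rw [Finset.sum_congr rfl e1, ← Int.cast_sum,
        show Finset.Icc 1 n = Finset.Icc 1 (2 * k + 1) from by rw [hk],
        L2aux k ((i : ℤ) - (2 * (n : ℤ) + 1)) (2 * (n : ℤ) + 1)]
      congr 1
      ring
    have hseven : Even i → (∑ j ∈ Finset.Icc 1 n, A i j) =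
        ((2 * (n : ℤ) + 1 - (i : ℤ) + (k : ℤ) * (2 * (n : ℤ) + 1) : ℤ)
          : ZMod (2 * n ^ 2 + n)) := by
      intro hie
      have e1 : ∀ j ∈ Finset.Icc 1 n, A i j =
          ((((-1) ^ (j + 1) * ((-(i : ℤ)) + (2 * (n : ℤ) + 1) * (j : ℤ))) : ℤ)
            : ZMod (2 * n ^ 2 + n)) := by
        intro j hj
        rw [(hA i hi j hj).2 hie]
        congr 1
        ring
      rw [Finset.sum_congr rfl e1, ← Int.cast_sum,
        show Finset.Icc 1 n = Finset.Icc 1 (2 * k + 1) from by rw [hk],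
        L2aux k (-(i : ℤ)) (2 * (n : ℤ) + 1)]
      congr 1
      ring
    refine ⟨fun hio => by rw [hsodd hio, hdiv], fun hie => by rw [hseven hie, hdiv], ?_⟩
    -- divisibility of the additive order by 2n+1
    have hi1 : 1 ≤ i := (Finset.mem_Icc.mp hi).1
    have hi2 : i ≤ n := (Finset.mem_Icc.mp hi).2
    have key : ∀ r : ℤ, (∑ j ∈ Finset.Icc 1 n, A i j) = ((r : ℤ) : ZMod (2 * n ^ 2 + n)) →
        ¬ ((2 * (n : ℤ) + 1) ∣ r) → (2 * n + 1) ∣ addOrderOf (∑ j ∈ Finset.Icc 1 n, A i j) := by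
      intro r hr hnd
      set m := addOrderOf (∑ j ∈ Finset.Icc 1 n, A i j) with hm
      have hms : m • (∑ j ∈ Finset.Icc 1 n, A i j) = 0 := addOrderOf_nsmul_eq_zero _
      rw [hr] at hms
      have hms' : (((m : ℤ) * r : ℤ) : ZMod (2 * n ^ 2 + n)) = 0 := by
        rw [← hms, nsmul_eq_mul]
        push_cast
        ring
      have hdvd : ((2 * n ^ 2 + n : ℕ) : ℤ) ∣ (m : ℤ) * r :=
        (ZMod.intCast_zmod_eq_zero_iff_dvd _ _).mp hms'
      have hpdvd : (2 * (n : ℤ) + 1) ∣ (m : ℤ) * r := by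
        refine dvd_trans ⟨(n : ℤ), ?_⟩ hdvd
        push_cast
        ring
      have hpprime : Prime (2 * (n : ℤ) + 1) := by
        have := Nat.prime_iff_prime_int.mp hp
        exact_mod_cast this
      rcases hpprime.dvd_mul.mp hpdvd with h | h
      · have : ((2 * n + 1 : ℕ) : ℤ) ∣ (m : ℤ) := by
          push_cast
          exact h
        exact_mod_cast this
      · exact absurd h hnd
    have hnoti : ¬ ((2 * (n : ℤ) + 1) ∣ (i : ℤ)) := by
      intro h
      have := Int.le_of_dvd (by exact_mod_cast hi1) h
      omega
    rcases Nat.even_or_odd i with he | ho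
    · refine key (2 * (n : ℤ) + 1 - (i : ℤ) + (k : ℤ) * (2 * (n : ℤ) + 1)) (hseven he) ?_
      intro h
      exact hnoti (by
        have : (2 * (n : ℤ) + 1) ∣ ((1 + (k : ℤ)) * (2 * (n : ℤ) + 1)
            - (2 * (n : ℤ) + 1 - (i : ℤ) + (k : ℤ) * (2 * (n : ℤ) + 1))) :=
          dvd_sub ⟨1 + (k : ℤ), by ring⟩ h
        convert this using 1
        ring)
    · refine key ((i : ℤ) + (k : ℤ) * (2 * (n : ℤ) + 1)) (hsodd ho) ?_
      intro h
      exact hnoti (by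
        have : (2 * (n : ℤ) + 1) ∣ (((i : ℤ) + (k : ℤ) * (2 * (n : ℤ) + 1))
            - (k : ℤ) * (2 * (n : ℤ) + 1)) := dvd_sub h (dvd_mul_left _ _)
        convert this using 1
        ring)
end
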